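/- Let H be a Hilbert space, E a right Hilbert K(H)-module, F a nontrivial closed submodule of E (with F^⊥ ≠ 0), and φ : K(H) → B(H₁) a nonzero completely positive map. Then no non-degenerate operator-valued φ-map Φ : F → B(H₁, H₂) admits a φ-map extension to E. -/

import Mathlib

open scoped ComplexOrder RightActions Matrix

/-- The `B(H₁)`-valued inner product `⟪T, S⟫ = T* S` on `B(H₁, H₂)`. -/
noncomputable def opInner {H₁ H₂ : Type*} [NormedAddCommGroup H₁] [InnerProductSpace ℂ H₁]
    [CompleteSpace H₁] [NormedAddCommGroup H₂] [InnerProductSpace ℂ H₂] [CompleteSpace H₂]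
    (T S : H₁ →L[ℂ] H₂) : H₁ →L[ℂ] H₁ :=
  (ContinuousLinearMap.adjoint T).comp S

/-- A matrix over a (C*-)algebra is positive iff it factors as `Nᴴ * N`. -/
def MatIsPos {R : Type*} [NonUnitalSemiring R] [StarRing R] {n : ℕ}
    (M : Matrix (Fin n) (Fin n) R) : Prop :=
  ∃ N : Matrix (Fin n) (Fin n) R, M = Nᴴ * N

/-- A linear map between C*-algebras is completely positive if all of its matrix
amplifications preserve positivity. -/
def IsCompletelyPositive {A B : Type*} [NonUnitalSemiring A] [StarRing A] [Module ℂ A]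
    [NonUnitalSemiring B] [StarRing B] [Module ℂ B] (φ : A →ₗ[ℂ] B) : Prop :=
  ∀ (n : ℕ) (M : Matrix (Fin n) (Fin n) A), MatIsPos M → MatIsPos (M.map φ)

/-- The December 2024 Mathlib `CStarModule` (right action via `SMul Aᵐᵒᵖ E`), restored
under a new name since Mathlib's `CStarModule` now uses a left `A`-action. -/
class CStarModuleOld (A E : Type*) [NonUnitalSemiring A] [StarRing A] [Module ℂ A]
    [AddCommGroup E] [Module ℂ E] [PartialOrder A] [SMul Aᵐᵒᵖ E] [Norm A] [Norm E]
    extends Inner A E where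
  inner_add_right {x} {y} {z} : inner x (y + z) = inner x y + inner x z
  inner_self_nonneg {x} : 0 ≤ inner x x
  inner_self {x} : inner x x = 0 ↔ x = 0
  inner_op_smul_right {a : A} {x y : E} : inner x (y <• a) = inner x y * a
  inner_smul_right_complex {z : ℂ} {x} {y} : inner x (z • y) = z • inner x y
  star_inner x y : star (inner x y) = inner y x
  norm_eq_sqrt_norm_inner_self x : ‖x‖ = √‖inner x x‖


/-!
A φ-map `Ψ` on `E` extending a non-degenerate `Φ` must vanish on `F^⊥`: for `w ⊥ F` the operator
`Ψ(w)*` kills every `Φ(x)h = Ψ(x)h`, and these span a dense subspace. Hence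
`φ(⟨x, w⟩) = Ψ(x)* Ψ(w) = 0`, so `φ` kills the two-sided ideal generated by `c = ⟨z, z⟩ ≠ 0`
for any nonzero `z ⊥ F`. In `K(H)` that ideal contains every rank-one operator, hence is dense,
and `φ`, being completely positive, is positive and therefore continuous; so `φ = 0`.
-/

open InnerProductSpace

section CompletelyPositive

variable {A B : Type*} [NonUnitalCStarAlgebra A] [PartialOrder A] [StarOrderedRing A]

lemma IsCompletelyPositive.map_nonneg [NonUnitalSemiring B] [StarRing B] [Module ℂ B]
    [PartialOrder B] [StarOrderedRing B] {φ : A →ₗ[ℂ] B} (hφ : IsCompletelyPositive φ) {a : A}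
    (ha : 0 ≤ a) : 0 ≤ φ a := by
  obtain ⟨b, rfl⟩ := CStarAlgebra.nonneg_iff_eq_star_mul_self.mp ha
  obtain ⟨N, hN⟩ := hφ 1 (Matrix.of fun _ _ => star b * b)
    ⟨Matrix.of fun _ _ => b, by ext; simp [Matrix.mul_apply]⟩
  have h00 := congr_fun₂ hN 0 0
  simp only [Matrix.map_apply, Matrix.of_apply, Matrix.mul_apply, Matrix.conjTranspose_apply,
    Finset.univ_unique, Fin.default_eq_zero, Finset.sum_singleton] at h00
  rw [h00]
  exact star_mul_self_nonneg _

lemma IsCompletelyPositive.continuous [NonUnitalCStarAlgebra B] [PartialOrder B]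
    [StarOrderedRing B] {φ : A →ₗ[ℂ] B} (hφ : IsCompletelyPositive φ) : Continuous φ :=
  map_continuous (PositiveLinearMap.mk₀ φ fun _ => hφ.map_nonneg)

end CompletelyPositive

section RankOne

variable {𝕜 E F G : Type*} [RCLike 𝕜] [NormedAddCommGroup E] [InnerProductSpace 𝕜 E]
  [NormedAddCommGroup F] [InnerProductSpace 𝕜 F] [NormedAddCommGroup G] [InnerProductSpace 𝕜 G]

lemma isCompactOperator_rankOne (u : F) (w : E) : IsCompactOperator (rankOne 𝕜 u w) :=
  (isCompactOperator_of_locallyCompactSpace_rng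
    (ContinuousLinearMap.toSpanSingleton 𝕜 u)).comp_clm (innerSL 𝕜 w)

lemma rankOne_eq_smul_rankOne_comp_comp_rankOne {H : Type*} [NormedAddCommGroup H]
    [InnerProductSpace 𝕜 H] {T : G →L[𝕜] F} {v : G} (hv : T v ≠ 0) (u : H) (w : E) :
    rankOne 𝕜 u w = (‖T v‖ ^ 2 : 𝕜)⁻¹ • (rankOne 𝕜 u (T v) ∘L T ∘L rankOne 𝕜 v w) := by
  rw [comp_rankOne, rankOne_comp_rankOne, inner_self_eq_norm_sq_to_K,
    smul_smul, inv_mul_cancel₀ (by simpa using hv), one_smul]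

variable (𝕜 E F) in
noncomputable def rankOneSpan : Submodule 𝕜 (E →L[𝕜] F) :=
  Submodule.span 𝕜 (Set.range fun p : F × E => rankOne 𝕜 p.1 p.2)

lemma rankOne_mem_rankOneSpan (u : F) (w : E) : rankOne 𝕜 u w ∈ rankOneSpan 𝕜 E F :=
  Submodule.subset_span ⟨(u, w), rfl⟩

lemma IsCompactOperator.exists_norm_sub_starProjection_comp_le {T : E →L[𝕜] F}
    (hT : IsCompactOperator T) {ε : ℝ} (hε : 0 < ε) :
    ∃ t : Finset F, ‖T - (Submodule.span 𝕜 (t : Set F)).starProjection ∘L T‖ ≤ ε := by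
  obtain ⟨t, htfin, hcover⟩ := Metric.totallyBounded_iff.mp
    ((hT.isCompact_closure_image_closedBall 1).totallyBounded.subset subset_closure) ε hε
  lift t to Finset F using htfin
  refine ⟨t, ContinuousLinearMap.opNorm_le_of_unit_norm hε.le fun x hx => ?_⟩
  obtain ⟨y, hy, hTxy⟩ := Set.mem_iUnion₂.mp
    (hcover (Set.mem_image_of_mem T (mem_closedBall_zero_iff.mpr hx.le)))
  calc ‖(T - (Submodule.span 𝕜 (t : Set F)).starProjection ∘L T) x‖
      = ⨅ u : Submodule.span 𝕜 (t : Set F), ‖T x - u‖ := Submodule.starProjection_minimal _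
    _ ≤ ‖T x - y‖ := ciInf_le ⟨0, by rintro r ⟨u, rfl⟩; positivity⟩
        (⟨y, Submodule.subset_span hy⟩ : Submodule.span 𝕜 (t : Set F))
    _ ≤ ε := (mem_ball_iff_norm.mp hTxy).le

variable [CompleteSpace E] [CompleteSpace F]

lemma starProjection_comp_mem_rankOneSpan (U : Submodule 𝕜 F) [FiniteDimensional 𝕜 U]
    (T : E →L[𝕜] F) : U.starProjection ∘L T ∈ rankOneSpan 𝕜 E F := by
  rw [(stdOrthonormalBasis 𝕜 U).starProjection_eq_sum_rankOne, ContinuousLinearMap.finsetSum_comp]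
  exact Submodule.sum_mem _ fun i _ => by
    rw [rankOne_comp]
    exact rankOne_mem_rankOneSpan _ _

lemma IsCompactOperator.mem_closure_rankOneSpan {T : E →L[𝕜] F} (hT : IsCompactOperator T) :
    T ∈ closure (rankOneSpan 𝕜 E F : Set (E →L[𝕜] F)) := by
  refine Metric.mem_closure_iff.mpr fun ε hε => ?_
  obtain ⟨t, ht⟩ := hT.exists_norm_sub_starProjection_comp_le (half_pos hε)
  exact ⟨_, starProjection_comp_mem_rankOneSpan (Submodule.span 𝕜 (t : Set F)) T,
    by rw [dist_eq_norm]; linarith⟩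

end RankOne

section Compacts

variable {A H : Type*} [NonUnitalCStarAlgebra A] [NormedAddCommGroup H] [InnerProductSpace ℂ H]
  [CompleteSpace H] {π : A →⋆ₙₐ[ℂ] (H →L[ℂ] H)}

lemma exists_map_smul_mul_mul_eq_rankOne
    (hπrange : ∀ T : H →L[ℂ] H, IsCompactOperator T → ∃ a : A, π a = T) {c : A} {v : H}
    (hv : π c v ≠ 0) (u w : H) : ∃ s t : A, ∃ r : ℂ, π (r • (s * c * t)) = rankOne ℂ u w := by
  obtain ⟨s, hs⟩ := hπrange _ (isCompactOperator_rankOne u (π c v))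
  obtain ⟨t, ht⟩ := hπrange _ (isCompactOperator_rankOne v w)
  refine ⟨s, t, (‖π c v‖ ^ 2 : ℂ)⁻¹, ?_⟩
  rw [map_smul, map_mul, map_mul, hs, ht, rankOne_eq_smul_rankOne_comp_comp_rankOne hv u w]
  rfl

/-- Simplicity of `K(H)`, in the form needed: the closed ideal generated by a nonzero `c` is
everything. -/
lemma LinearMap.eq_zero_of_map_mul_mul_eq_zero {B : Type*} [AddCommGroup B] [Module ℂ B]
    [TopologicalSpace B] [T1Space B] (hπiso : Isometry π)
    (hπrange : ∀ T : H →L[ℂ] H, IsCompactOperator T ↔ ∃ a : A, π a = T)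
    {φ : A →ₗ[ℂ] B} (hφ : Continuous φ) {c : A} (hc : c ≠ 0)
    (hφc : ∀ s t : A, φ (s * c * t) = 0) : φ = 0 := by
  obtain ⟨v, hv⟩ : ∃ v : H, π c v ≠ 0 := by
    by_contra! h
    exact hc (hπiso.injective (by ext1 v; simp [h v]))
  let K := (LinearMap.ker φ).map (π : A →ₗ[ℂ] (H →L[ℂ] H))
  have hK_closed : IsClosed (K : Set (H →L[ℂ] H)) :=
    hπiso.isClosedEmbedding.isClosedMap _ (isClosed_singleton.preimage hφ)
  have hrankOne : rankOneSpan ℂ H H ≤ K := by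
    refine Submodule.span_le.mpr ?_
    rintro _ ⟨⟨u, w⟩, rfl⟩
    obtain ⟨s, t, r, hst⟩ := exists_map_smul_mul_mul_eq_rankOne (fun T => (hπrange T).mp) hv u w
    exact ⟨r • (s * c * t), by simp [hφc], hst⟩
  ext a
  obtain ⟨d, hd, hda⟩ : π a ∈ K :=
    closure_minimal hrankOne hK_closed ((hπrange _).mpr ⟨a, rfl⟩).mem_closure_rankOneSpan
  rw [← hπiso.injective hda]
  exact hd

end Compacts

lemma ContinuousLinearMap.eq_zero_of_adjoint_comp_eq_zero {𝕜 ι H₁ H₂ H₃ : Type*} [RCLike 𝕜]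
    [NormedAddCommGroup H₁] [InnerProductSpace 𝕜 H₁]
    [NormedAddCommGroup H₂] [InnerProductSpace 𝕜 H₂] [CompleteSpace H₂]
    [NormedAddCommGroup H₃] [InnerProductSpace 𝕜 H₃] [CompleteSpace H₃] {Φ : ι → H₁ →L[𝕜] H₂}
    (hΦ : Dense (Submodule.span 𝕜 {v : H₂ | ∃ (i : ι) (h : H₁), v = Φ i h} : Set H₂))
    {S : H₃ →L[𝕜] H₂} (hS : ∀ i, adjoint S ∘L Φ i = 0) : S = 0 := by
  have hS' : adjoint S = 0 :=
    ContinuousLinearMap.ext_on hΦ (by rintro _ ⟨i, h, rfl⟩; exact congr($(hS i) h))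
  simpa using congr(adjoint $hS')

lemma CStarModuleOld.inner_op_smul_left {A E : Type*} [NonUnitalSemiring A] [StarRing A]
    [Module ℂ A] [PartialOrder A] [Norm A] [AddCommGroup E] [Module ℂ E] [SMul Aᵐᵒᵖ E] [Norm E]
    [CStarModuleOld A E]
    {a : A} {x y : E} : inner A (x <• a) y = star a * inner A x y := by
  rw [← CStarModuleOld.star_inner y, CStarModuleOld.inner_op_smul_right, star_mul,
    CStarModuleOld.star_inner]

theorem no_phiMap_extension_over_compacts_general
    {A : Type*} [NonUnitalCStarAlgebra A] [PartialOrder A] [StarOrderedRing A]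
    {H : Type*} [NormedAddCommGroup H] [InnerProductSpace ℂ H] [CompleteSpace H]
    (π : A →⋆ₙₐ[ℂ] (H →L[ℂ] H)) (hπiso : Isometry π)
    (hπrange : ∀ T : H →L[ℂ] H, IsCompactOperator T ↔ ∃ a : A, π a = T)
    {E : Type*} [NormedAddCommGroup E] [NormedSpace ℂ E] [SMul Aᵐᵒᵖ E]
    [CStarModuleOld A E]
    (F : Submodule ℂ E)
    (hFperpne : ∃ z : E, z ≠ 0 ∧ ∀ y ∈ F, (inner A z y : A) = 0)
    {H₁ H₂ : Type*} [NormedAddCommGroup H₁] [InnerProductSpace ℂ H₁] [CompleteSpace H₁]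
    [NormedAddCommGroup H₂] [InnerProductSpace ℂ H₂] [CompleteSpace H₂]
    (φ : A →ₗ[ℂ] (H₁ →L[ℂ] H₁)) (hφ : IsCompletelyPositive φ) (hφne : φ ≠ 0)
    (Φ : F → (H₁ →L[ℂ] H₂))
    (hnd : Dense (↑(Submodule.span ℂ {v : H₂ | ∃ (x : F) (h : H₁), v = Φ x h}) : Set H₂)) :
    ¬ ∃ Ψ : E → (H₁ →L[ℂ] H₂),
        (∀ x : F, Ψ x = Φ x) ∧
        (∀ x y : E, opInner (Ψ x) (Ψ y) = φ (inner A x y : A)) := by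
  rintro ⟨Ψ, hΨΦ, hΨ⟩
  obtain ⟨z, hz0, hzF⟩ := hFperpne
  have hΨ_perp (t : A) : Ψ (z <• t) = 0 :=
    ContinuousLinearMap.eq_zero_of_adjoint_comp_eq_zero hnd fun x => by
      rw [← hΨΦ x]
      exact (hΨ _ _).trans <| by
        rw [CStarModuleOld.inner_op_smul_left, hzF x x.2, mul_zero, map_zero]
  have hφ_ideal (s t : A) : φ (s * inner A z z * t) = 0 := by
    rw [mul_assoc, ← CStarModuleOld.inner_op_smul_right, ← star_star s,
      ← CStarModuleOld.inner_op_smul_left, ← hΨ, hΨ_perp, opInner, map_zero,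
      ContinuousLinearMap.zero_comp]
  exact hφne (LinearMap.eq_zero_of_map_mul_mul_eq_zero hπiso hπrange hφ.continuous
    (CStarModuleOld.inner_self.not.mpr hz0) hφ_ideal)

/-- **Corollary: no φ-map over `K(H)` extends.**
If `A ≅ K(H)`, `F` is a nontrivial closed submodule of a Hilbert `A`-module `E`
with `F^⊥ ≠ 0`, and `φ : A → B(H₁)` is a nonzero completely positive map, then no
non-degenerate `φ`-map `Φ : F → B(H₁, H₂)` admits a `φ`-map extension to `E`. -/
theorem no_phiMap_extension_over_compacts
    {A : Type*} [NonUnitalCStarAlgebra A] [PartialOrder A] [StarOrderedRing A]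
    {H : Type*} [NormedAddCommGroup H] [InnerProductSpace ℂ H] [CompleteSpace H]
    (π : A →⋆ₙₐ[ℂ] (H →L[ℂ] H)) (hπiso : Isometry π)
    (hπrange : ∀ T : H →L[ℂ] H, IsCompactOperator T ↔ ∃ a : A, π a = T)
    {E : Type*} [NormedAddCommGroup E] [NormedSpace ℂ E] [SMul Aᵐᵒᵖ E]
    [CStarModuleOld A E] [CompleteSpace E]
    (F : Submodule ℂ E) (hFclosed : IsClosed (F : Set E))
    (hFmod : ∀ (a : A) (x : E), x ∈ F → x <• a ∈ F)
    (hFne : F ≠ ⊥) (hFproper : F ≠ ⊤)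
    (hFperpne : ∃ z : E, z ≠ 0 ∧ ∀ y ∈ F, (inner A z y : A) = 0)
    {H₁ H₂ : Type*} [NormedAddCommGroup H₁] [InnerProductSpace ℂ H₁] [CompleteSpace H₁]
    [NormedAddCommGroup H₂] [InnerProductSpace ℂ H₂] [CompleteSpace H₂]
    (φ : A →ₗ[ℂ] (H₁ →L[ℂ] H₁)) (hφ : IsCompletelyPositive φ) (hφne : φ ≠ 0)
    (Φ : F → (H₁ →L[ℂ] H₂))
    (hΦmap : ∀ x y : F, opInner (Φ x) (Φ y) = φ (inner A (x : E) (y : E) : A))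
    (hnd : Dense (↑(Submodule.span ℂ {v : H₂ | ∃ (x : F) (h : H₁), v = Φ x h}) : Set H₂)) :
    ¬ ∃ Ψ : E → (H₁ →L[ℂ] H₂),
        (∀ x : F, Ψ x = Φ x) ∧
        (∀ x y : E, opInner (Ψ x) (Ψ y) = φ (inner A x y : A)) :=
  no_phiMap_extension_over_compacts_general π hπiso hπrange F hFperpne φ hφ hφne Φ hnd
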